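/- arXiv:2208.09264 — 3 statements merged into one kernel-verified Lean document; each statement's English description precedes it below -/
import Mathlib

section
/- Let T = (a,b) be a bounded open interval, p a natural number, and u a polynomial of degree at most p restricted to T. Then the supremum norm of u on T is at most (p+1)/√(b−a) times the L² norm of u on T. -/
open Polynomial intervalIntegral
open scoped Nat

/-!
Let `Pₙ` be the shifted Legendre polynomials on `[0, 1]`, orthogonal to all polynomials of degree
`< n`, with `Pₙ(0) = 1` and `Pₙ(1) = (-1)ⁿ`. The polynomial `G = (-1)ᵖ (Pₚ - Pₚ₊₁) / 2` vanishes
at `0`, equals `1` at `1` and is orthogonal to every `r'` with `deg r ≤ p`, so integration by parts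
gives `∫₀¹ G' r = r(1)`: `G'` is the reproducing kernel of evaluation at `1`. Cauchy–Schwarz then
gives `r(1)² ≤ ∫₀¹ G'² · ∫₀¹ r² = G'(1) ∫₀¹ r² = (p + 1)² ∫₀¹ r²`. An affine change of variables
moves this to either endpoint of any interval, and adding the bounds on `(a, t)` and `(t, b)` gives
`(b - a) u(t)² ≤ (p + 1)² ∫ₐᵇ u²`.
-/

theorem sq_integral_mul_le_integral_sq_mul_integral_sq {f g : ℝ → ℝ} {a b : ℝ} (hab : a ≤ b)
    (hf : Continuous f) (hg : Continuous g) :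
    (∫ x in a..b, f x * g x) ^ 2 ≤ (∫ x in a..b, f x ^ 2) * ∫ x in a..b, g x ^ 2 := by
  have hquad : ∀ s : ℝ, 0 ≤ (∫ x in a..b, f x ^ 2) * (s * s)
      + 2 * (∫ x in a..b, f x * g x) * s + ∫ x in a..b, g x ^ 2 := by
    intro s
    have hexpand : ∀ x, (s * f x + g x) ^ 2 = s ^ 2 * f x ^ 2 + 2 * s * (f x * g x) + g x ^ 2 :=
      fun x => by ring
    calc (0 : ℝ) ≤ ∫ x in a..b, (s * f x + g x) ^ 2 := integral_nonneg hab fun x _ => sq_nonneg _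
      _ = _ := by
        simp_rw [hexpand]
        rw [integral_add, integral_add, integral_const_mul, integral_const_mul]
        · ring
        all_goals exact Continuous.intervalIntegrable (by fun_prop) a b
  have hdiscrim := discrim_le_zero hquad
  rw [discrim] at hdiscrim
  linarith

namespace Polynomial

theorem isRoot_iterate_derivative_pow {R : Type*} [CommSemiring R] {q : R[X]} {t : R}
    (ht : q.IsRoot t) {i n : ℕ} (hi : i < n) : (derivative^[i] (q ^ n)).IsRoot t := by
  obtain ⟨g, hg⟩ := pow_sub_dvd_iterate_derivative_pow q n i
  rw [IsRoot, hg, eval_mul, eval_pow, ht.eq_zero, zero_pow (by omega), zero_mul]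

theorem integral_derivative_mul (f g : ℝ[X]) (a b : ℝ) :
    ∫ x in a..b, (derivative f).eval x * g.eval x
      = f.eval b * g.eval b - f.eval a * g.eval a
        - ∫ x in a..b, f.eval x * (derivative g).eval x := by
  rw [eq_sub_iff_add_eq, ← integral_add]
  · exact integral_eq_sub_of_hasDerivAt (fun x _ => (f.hasDerivAt x).mul (g.hasDerivAt x))
      (Continuous.intervalIntegrable (by fun_prop) a b)
  all_goals exact Continuous.intervalIntegrable (by fun_prop) a b

theorem integral_iterate_derivative_mul_eq_zero {f r : ℝ[X]} {a b : ℝ} {m : ℕ}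
    (hf : ∀ i < m, (derivative^[i] f).IsRoot a ∧ (derivative^[i] f).IsRoot b)
    (hr : derivative^[m] r = 0) :
    ∫ x in a..b, (derivative^[m] f).eval x * r.eval x = 0 := by
  induction m generalizing r with
  | zero => simp [show r = 0 from hr]
  | succ m ih =>
    obtain ⟨hfa, hfb⟩ := hf m m.lt_succ_self
    rw [Function.iterate_succ_apply', integral_derivative_mul, hfa.eq_zero, hfb.eq_zero,
      ih (fun i hi => hf i (hi.trans m.lt_succ_self)) hr]
    ring

noncomputable def realShiftedLegendre (n : ℕ) : ℝ[X] :=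
  (shiftedLegendre n).map (Int.castRingHom ℝ)

theorem factorial_mul_realShiftedLegendre (n : ℕ) :
    (n ! : ℝ[X]) * realShiftedLegendre n = derivative^[n] ((X * (1 - X)) ^ n) := by
  simpa [realShiftedLegendre, ← iterate_derivative_map, mul_pow] using
    congrArg (map (Int.castRingHom ℝ)) (factorial_mul_shiftedLegendre_eq n)

theorem neg_one_pow_mul_realShiftedLegendre_comp_one_sub_X (n : ℕ) :
    (-1) ^ n * (realShiftedLegendre n).comp (1 - X) = realShiftedLegendre n := by
  simpa [realShiftedLegendre, map_comp] using
    congrArg (map (Int.castRingHom ℝ)) (neg_one_pow_mul_shiftedLegendre_comp_one_sub_X_eq n)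

theorem coeff_realShiftedLegendre (n k : ℕ) :
    (realShiftedLegendre n).coeff k = (-1) ^ k * n.choose k * (n + k).choose n := by
  simp [realShiftedLegendre, coeff_shiftedLegendre]

theorem natDegree_realShiftedLegendre (n : ℕ) : (realShiftedLegendre n).natDegree = n := by
  rw [realShiftedLegendre, natDegree_map_eq_of_injective (RingHom.injective_int _),
    natDegree_shiftedLegendre]

theorem realShiftedLegendre_eval_zero (n : ℕ) : (realShiftedLegendre n).eval 0 = 1 := by
  simp [← coeff_zero_eq_eval_zero, coeff_realShiftedLegendre]

theorem realShiftedLegendre_eval_one (n : ℕ) : (realShiftedLegendre n).eval 1 = (-1) ^ n := by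
  have := congrArg (eval 1) (neg_one_pow_mul_realShiftedLegendre_comp_one_sub_X n)
  simpa [eval_comp, realShiftedLegendre_eval_zero] using this.symm

theorem derivative_realShiftedLegendre_eval_one (n : ℕ) :
    (derivative (realShiftedLegendre n)).eval 1 = (-1) ^ n * n * (n + 1) := by
  have := congrArg (fun q => (derivative q).eval 0)
    (neg_one_pow_mul_realShiftedLegendre_comp_one_sub_X n)
  simp only [show (-1 : ℝ[X]) ^ n = C ((-1) ^ n) by simp, derivative_C_mul,
    derivative_comp_one_sub_X, eval_mul, eval_C, eval_neg, eval_comp, eval_sub, eval_one,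
    eval_X, sub_zero, ← coeff_zero_eq_eval_zero, coeff_derivative,
    coeff_realShiftedLegendre] at this
  norm_num [Nat.choose_succ_self_right] at this
  have hsq : ((-1 : ℝ) ^ n) ^ 2 = 1 := by simp [← pow_mul]
  linear_combination (-1) ^ n * this - (derivative (realShiftedLegendre n)).eval 1 * hsq

theorem integral_realShiftedLegendre_mul_eq_zero {n : ℕ} {r : ℝ[X]} (hr : derivative^[n] r = 0) :
    ∫ x in (0 : ℝ)..1, (realShiftedLegendre n).eval x * r.eval x = 0 := by
  have hroot : ∀ i < n, (derivative^[i] ((X * (1 - X) : ℝ[X]) ^ n)).IsRoot 0 ∧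
      (derivative^[i] ((X * (1 - X) : ℝ[X]) ^ n)).IsRoot 1 := fun i hi =>
    ⟨isRoot_iterate_derivative_pow (by simp) hi, isRoot_iterate_derivative_pow (by simp) hi⟩
  have h := integral_iterate_derivative_mul_eq_zero hroot hr
  simp only [← factorial_mul_realShiftedLegendre, eval_mul, eval_natCast, mul_assoc,
    integral_const_mul] at h
  exact (mul_eq_zero.mp h).resolve_left (by exact_mod_cast n.factorial_ne_zero)

noncomputable def evalOneKernel (p : ℕ) : ℝ[X] :=
  derivative (C ((-1) ^ p / 2) * (realShiftedLegendre p - realShiftedLegendre (p + 1)))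

theorem natDegree_evalOneKernel_le (p : ℕ) : (evalOneKernel p).natDegree ≤ p := by
  have h : (C ((-1 : ℝ) ^ p / 2) * (realShiftedLegendre p - realShiftedLegendre (p + 1))).natDegree
      ≤ p + 1 :=
    natDegree_C_mul_le _ _ |>.trans <| natDegree_sub_le _ _ |>.trans <| by
      simp [natDegree_realShiftedLegendre]
  exact (natDegree_derivative_le _).trans (by omega)

theorem integral_evalOneKernel_mul {p : ℕ} {r : ℝ[X]} (hr : r.natDegree ≤ p) :
    ∫ x in (0 : ℝ)..1, (evalOneKernel p).eval x * r.eval x = r.eval 1 := by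
  have hp : derivative^[p] (derivative r) = 0 := by
    rw [← Function.iterate_succ_apply]; exact iterate_derivative_eq_zero (by omega)
  have hp1 : derivative^[p + 1] (derivative r) = 0 := by
    rw [Function.iterate_succ_apply', hp, derivative_zero]
  have horth : ∫ x in (0 : ℝ)..1, (realShiftedLegendre p - realShiftedLegendre (p + 1)).eval x
      * (derivative r).eval x = 0 := by
    simp only [eval_sub, sub_mul]
    rw [integral_sub, integral_realShiftedLegendre_mul_eq_zero hp,
      integral_realShiftedLegendre_mul_eq_zero hp1, sub_zero]
    all_goals exact Continuous.intervalIntegrable (by fun_prop) 0 1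
  rw [evalOneKernel, integral_derivative_mul]
  simp only [eval_mul, eval_C, mul_assoc, integral_const_mul]
  rw [horth]
  simp only [eval_sub, realShiftedLegendre_eval_zero, realShiftedLegendre_eval_one]
  have hsq : ((-1 : ℝ) ^ p) ^ 2 = 1 := by simp [← pow_mul]
  linear_combination r.eval 1 * hsq

theorem evalOneKernel_eval_one (p : ℕ) : (evalOneKernel p).eval 1 = ((p : ℝ) + 1) ^ 2 := by
  simp only [evalOneKernel, derivative_C_mul, derivative_sub, eval_mul, eval_C, eval_sub,
    derivative_realShiftedLegendre_eval_one]
  push_cast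
  have hsq : ((-1 : ℝ) ^ p) ^ 2 = 1 := by simp [← pow_mul]
  linear_combination ((p : ℝ) + 1) ^ 2 * hsq

theorem sq_eval_one_le_mul_integral {p : ℕ} {q : ℝ[X]} (hq : q.natDegree ≤ p) :
    q.eval 1 ^ 2 ≤ ((p : ℝ) + 1) ^ 2 * ∫ x in (0 : ℝ)..1, q.eval x ^ 2 := by
  have hK : ∫ x in (0 : ℝ)..1, (evalOneKernel p).eval x ^ 2 = ((p : ℝ) + 1) ^ 2 := by
    simp only [sq, integral_evalOneKernel_mul (natDegree_evalOneKernel_le p),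
      evalOneKernel_eval_one]
  calc q.eval 1 ^ 2 = (∫ x in (0 : ℝ)..1, (evalOneKernel p).eval x * q.eval x) ^ 2 := by
        rw [integral_evalOneKernel_mul hq]
    _ ≤ _ := sq_integral_mul_le_integral_sq_mul_integral_sq zero_le_one
        (evalOneKernel p).continuous q.continuous
    _ = _ := by rw [hK]

theorem sq_eval_le_mul_inv_mul_integral {p : ℕ} {q : ℝ[X]} (hq : q.natDegree ≤ p) {c d : ℝ}
    (hcd : c ≠ d) :
    q.eval d ^ 2 ≤ ((p : ℝ) + 1) ^ 2 * ((d - c)⁻¹ * ∫ x in c..d, q.eval x ^ 2) := by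
  have hdeg : (q.comp (C (d - c) * X + C c)).natDegree ≤ p :=
    natDegree_comp_le.trans <| by nlinarith [natDegree_linear_le (a := d - c) (b := c)]
  have h := sq_eval_one_le_mul_integral hdeg
  simp only [eval_comp, eval_add, eval_mul, eval_C, eval_X] at h
  rw [integral_comp_mul_add (fun x => q.eval x ^ 2) (sub_ne_zero.mpr hcd.symm)] at h
  simpa using h

end Polynomial

theorem sup_norm_le_L2_norm_poly_general (a b : ℝ) (p : ℕ)
    (u : Polynomial ℝ) (hu : u.natDegree ≤ p) :
    ∀ t ∈ Set.Ioo a b,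
      |u.eval t| ≤ ((p : ℝ) + 1) / Real.sqrt (b - a) *
        Real.sqrt (∫ s in a..b, (u.eval s) ^ 2) := by
  rintro t ⟨hat, htb⟩
  set k : ℝ := ((p : ℝ) + 1) ^ 2
  have hleft : (t - a) * u.eval t ^ 2 ≤ k * ∫ x in a..t, u.eval x ^ 2 :=
    (le_div_iff₀' (sub_pos.2 hat)).1 <| (sq_eval_le_mul_inv_mul_integral hu hat.ne).trans_eq
      (by ring)
  have hright : (b - t) * u.eval t ^ 2 ≤ k * ∫ x in t..b, u.eval x ^ 2 := by
    have h := sq_eval_le_mul_inv_mul_integral hu htb.ne'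
    rw [integral_symm, mul_neg, ← neg_mul, neg_inv, neg_sub] at h
    exact (le_div_iff₀' (sub_pos.2 htb)).1 (h.trans_eq (by ring))
  have hint (c d : ℝ) : IntervalIntegrable (fun x => u.eval x ^ 2) MeasureTheory.volume c d :=
    (u.continuous.pow 2).intervalIntegrable c d
  have hsplit := integral_add_adjacent_intervals (hint a t) (hint t b)
  have hsq : u.eval t ^ 2 ≤ k / (b - a) * ∫ x in a..b, u.eval x ^ 2 := by
    rw [div_mul_eq_mul_div, le_div_iff₀' (by linarith), ← hsplit]
    linarith
  refine (Real.abs_le_sqrt hsq).trans_eq ?_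
  rw [Real.sqrt_mul' _ (integral_nonneg (by linarith) fun x _ => sq_nonneg _),
    Real.sqrt_div' _ (by linarith), Real.sqrt_sq (by positivity)]

theorem sup_norm_le_L2_norm_poly (a b : ℝ) (hab : a < b) (p : ℕ)
    (u : Polynomial ℝ) (hu : u.natDegree ≤ p) :
    ∀ t ∈ Set.Ioo a b,
      |u.eval t| ≤ ((p : ℝ) + 1) / Real.sqrt (b - a) *
        Real.sqrt (∫ s in a..b, (u.eval s) ^ 2) :=
  sup_norm_le_L2_norm_poly_general a b p u hu
end

section
/- Fix p ∈ ℕ. The minimum of (1/2)∫_{−1}^{1} v(t)² dt over all polynomials v of degree at most p satisfying v(1) = 1 equals 1/(p+1)². -/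
/-!
For `k = D^(p+1) [(X - 1)^p (X + 1)^(p+1)]`, integrating by parts `p + 1` times shows
`∫_{-1}^1 q k = p! 2^(p+1) q(1)` for every `q` of degree at most `p`: all boundary terms at `-1`
and all but one at `1` vanish because of the high-order zeros of the product. So `k` represents
evaluation at `1`, and for `v(1) = 1` the function `w = v - k / k(1)` is orthogonal to `k`;
hence `∫ v² = ∫ w² + p! 2^(p+1) / k(1) ≥ 2 / (p+1)²`, with equality at `v = k / k(1)`.
-/

open Finset Nat

namespace Polynomial

variable {R : Type*} [CommRing R]

theorem eval_iterate_derivative_X_sub_C_pow_mul (a : R) (h : R[X]) {n m : ℕ} (hnm : n ≤ m) :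
    eval a (derivative^[m] ((X - C a) ^ n * h)) =
      (m.choose n * n ! : R) * eval a (derivative^[m - n] h) := by
  rw [iterate_derivative_mul, eval_finsetSum,
    sum_eq_single_of_mem (m - n) (mem_range.mpr (by omega))]
  · rw [eval_smul, eval_mul, Nat.sub_sub_self hnm, iterate_derivative_X_sub_pow_self,
      Nat.choose_symm hnm, eval_natCast, nsmul_eq_mul]
    ring
  · intro k hk hkn
    rw [eval_smul, eval_mul, iterate_derivative_X_sub_pow, eval_smul, eval_pow, eval_sub, eval_X,
      eval_C, sub_self]
    rcases lt_or_gt_of_ne (show m - k ≠ n by grind) with h | h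
    · simp [zero_pow (Nat.sub_ne_zero_of_lt h)]
    · simp [Nat.descFactorial_eq_zero_iff_lt.mpr h]

theorem eval_iterate_derivative_eq_zero_of_pow_dvd {a : R} {f : R[X]} {i j : ℕ}
    (hf : (X - C a) ^ j ∣ f) (hij : i < j) : eval a (derivative^[i] f) = 0 :=
  dvd_iff_isRoot.mp <| (dvd_pow_self _ (Nat.sub_ne_zero_of_lt hij)).trans
    (pow_sub_dvd_iterate_derivative_of_pow_dvd _ hf)

theorem derivative_alternating_sum_iterate_derivative_mul (q g : R[X]) (n : ℕ) :
    derivative (∑ i ∈ range n, (-1 : R) ^ i • (derivative^[i] q * derivative^[n - 1 - i] g)) =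
      q * derivative^[n] g - (-1 : R) ^ n • (derivative^[n] q * g) := by
  set A : ℕ → R[X] := fun i => (-1 : R) ^ i • (derivative^[i] q * derivative^[n - i] g)
  have hstep : ∀ i ∈ range n,
      derivative ((-1 : R) ^ i • (derivative^[i] q * derivative^[n - 1 - i] g)) =
        A i - A (i + 1) := by
    intro i hi
    have hni : n - i = n - 1 - i + 1 := by grind
    simp only [A, derivative_smul, derivative_mul, ← Function.iterate_succ_apply' derivative, hni,
      show n - (i + 1) = n - 1 - i by omega, pow_succ, mul_neg_one, neg_smul, smul_add]
    abel
  rw [derivative_sum, sum_congr rfl hstep, sum_range_sub']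
  simp [A]

theorem integral_eval_derivative (f : ℝ[X]) (a b : ℝ) :
    ∫ t in a..b, (derivative f).eval t = f.eval b - f.eval a :=
  intervalIntegral.integral_eq_sub_of_hasDerivAt (fun t _ => f.hasDerivAt t)
    ((derivative f).continuous.intervalIntegrable _ _)

theorem integral_eval_mul_iterate_derivative {q : ℝ[X]} {n : ℕ} (hq : q.natDegree < n)
    (g : ℝ[X]) (a b : ℝ) :
    ∫ t in a..b, q.eval t * (derivative^[n] g).eval t =
      (∑ i ∈ range n, (-1 : ℝ) ^ i • (derivative^[i] q * derivative^[n - 1 - i] g)).eval b -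
        (∑ i ∈ range n, (-1 : ℝ) ^ i • (derivative^[i] q * derivative^[n - 1 - i] g)).eval a := by
  rw [← integral_eval_derivative, derivative_alternating_sum_iterate_derivative_mul,
    iterate_derivative_eq_zero hq]
  simp

/-- A Jacobi polynomial in Rodrigues form; up to the factor `n! (b - a) ^ (n + 1)` it represents
evaluation at `b` in `L²(a, b)` on polynomials of degree at most `n`. -/
noncomputable def endpointKernel (a b : R) (n : ℕ) : R[X] :=
  derivative^[n + 1] ((X - C b) ^ n * (X - C a) ^ (n + 1))

theorem natDegree_endpointKernel_le (a b : R) (n : ℕ) : (endpointKernel a b n).natDegree ≤ n := by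
  have : ((X - C b) ^ n * (X - C a) ^ (n + 1)).natDegree ≤ n * 1 + (n + 1) * 1 :=
    natDegree_mul_le_of_le (natDegree_pow_le_of_le n (natDegree_X_sub_C_le b))
      (natDegree_pow_le_of_le (n + 1) (natDegree_X_sub_C_le a))
  have := natDegree_iterate_derivative ((X - C b) ^ n * (X - C a) ^ (n + 1)) (n + 1)
  rw [endpointKernel]
  omega

theorem eval_endpointKernel_right (a b : R) (n : ℕ) :
    (endpointKernel a b n).eval b = n ! * (n + 1) ^ 2 * (b - a) ^ n := by
  rw [endpointKernel, eval_iterate_derivative_X_sub_C_pow_mul _ _ (n.le_add_right 1),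
    Nat.add_sub_cancel_left, Function.iterate_one, derivative_X_sub_C_pow]
  simp only [choose_succ_self_right, cast_add, cast_one, map_add, map_natCast, map_one,
    add_tsub_cancel_right, eval_mul, eval_add, eval_natCast, eval_one, eval_pow, eval_sub, eval_X,
    eval_C]
  ring

theorem integral_mul_endpointKernel {q : ℝ[X]} {n : ℕ} (hq : q.natDegree ≤ n) (a b : ℝ) :
    ∫ t in a..b, q.eval t * (endpointKernel a b n).eval t = n ! * (b - a) ^ (n + 1) * q.eval b := by
  rw [endpointKernel, integral_eval_mul_iterate_derivative (Nat.lt_succ_of_le hq), eval_finsetSum,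
    eval_finsetSum, sum_range_succ', sum_eq_zero, zero_add, sum_eq_zero, sub_zero]
  · rw [Nat.succ_sub_one, Nat.sub_zero, eval_smul, eval_mul,
      eval_iterate_derivative_X_sub_C_pow_mul _ _ le_rfl]
    simp only [pow_zero, Function.iterate_zero, id_eq, choose_self, cast_one, one_mul, tsub_self,
      eval_pow, eval_sub, eval_X, eval_C, smul_eq_mul]
    ring
  · intro i hi
    rw [eval_smul, eval_mul, eval_iterate_derivative_eq_zero_of_pow_dvd (j := n + 1)
      (dvd_mul_left _ _) (by grind), mul_zero, smul_zero]
  · intro i hi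
    rw [eval_smul, eval_mul, eval_iterate_derivative_eq_zero_of_pow_dvd (j := n)
      (dvd_mul_right _ _) (by grind), mul_zero, smul_zero]

theorem isLeast_integral_sq_of_integral_mul_eq {a b x c : ℝ} (hab : a ≤ b) {n : ℕ} {k : ℝ[X]}
    (hk : k.natDegree ≤ n) (hkx : k.eval x ≠ 0)
    (hrep : ∀ q : ℝ[X], q.natDegree ≤ n → ∫ t in a..b, q.eval t * k.eval t = c * q.eval x) :
    IsLeast {J : ℝ | ∃ v : ℝ[X], v.natDegree ≤ n ∧ v.eval x = 1 ∧ J = ∫ t in a..b, v.eval t ^ 2}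
      (c / k.eval x) := by
  set κ := k.eval x
  have hkk : ∫ t in a..b, k.eval t * k.eval t = c * κ := hrep k hk
  constructor
  · refine ⟨C κ⁻¹ * k, (natDegree_C_mul_le _ _).trans hk, by simp [κ, hkx], ?_⟩
    calc c / κ = κ⁻¹ ^ 2 * ∫ t in a..b, k.eval t * k.eval t := by
          rw [hkk]; field_simp
      _ = ∫ t in a..b, (C κ⁻¹ * k).eval t ^ 2 := by
          rw [← intervalIntegral.integral_const_mul]
          simp only [eval_mul, eval_C]
          ring_nf
  · rintro J ⟨v, hv, hvx, rfl⟩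
    -- `w` vanishes at `x`, so it is orthogonal to `k`, and `v = w + κ⁻¹ k` splits orthogonally
    set w := v - C κ⁻¹ * k
    have hwk : ∫ t in a..b, w.eval t * k.eval t = 0 := by
      rw [hrep w ((natDegree_sub_le _ _).trans (max_le hv ((natDegree_C_mul_le _ _).trans hk)))]
      simp [w, κ, hvx, hkx]
    have hsplit : ∫ t in a..b, v.eval t ^ 2 = (∫ t in a..b, w.eval t ^ 2) +
        2 * κ⁻¹ * (∫ t in a..b, w.eval t * k.eval t) +
          κ⁻¹ ^ 2 * ∫ t in a..b, k.eval t * k.eval t := by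
      rw [← intervalIntegral.integral_const_mul, ← intervalIntegral.integral_const_mul,
        ← intervalIntegral.integral_add, ← intervalIntegral.integral_add]
      · congr 1 with t
        simp only [w, eval_sub, eval_mul, eval_C]
        ring
      all_goals apply Continuous.intervalIntegrable; fun_prop
    have hw : 0 ≤ ∫ t in a..b, w.eval t ^ 2 :=
      intervalIntegral.integral_nonneg hab fun t _ => sq_nonneg _
    rw [hsplit, hwk, hkk, mul_zero, add_zero, show κ⁻¹ ^ 2 * (c * κ) = c / κ by field_simp]
    linarith

theorem isLeast_integral_sq_of_eval_eq_one {a b : ℝ} (hab : a < b) (n : ℕ) :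
    IsLeast {J : ℝ | ∃ v : ℝ[X], v.natDegree ≤ n ∧ v.eval b = 1 ∧ J = ∫ t in a..b, v.eval t ^ 2}
      ((b - a) / (n + 1) ^ 2) := by
  have hba : 0 < b - a := sub_pos.mpr hab
  have hK : (endpointKernel a b n).eval b ≠ 0 := by
    rw [eval_endpointKernel_right]
    positivity
  have hval : (b - a) / (n + 1) ^ 2 = n ! * (b - a) ^ (n + 1) / (endpointKernel a b n).eval b := by
    rw [eval_endpointKernel_right]
    field_simp
    ring
  rw [hval]
  exact isLeast_integral_sq_of_integral_mul_eq hab.le (natDegree_endpointKernel_le a b n) hK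
    fun q hq => integral_mul_endpointKernel hq a b

end Polynomial

theorem min_L2_poly_endpoint (p : ℕ) :
    IsLeast {J : ℝ | ∃ v : Polynomial ℝ, v.natDegree ≤ p ∧ v.eval 1 = 1 ∧
        J = (1 / 2) * ∫ t in (-1 : ℝ)..1, (v.eval t) ^ 2}
      (1 / ((p : ℝ) + 1) ^ 2) := by
  obtain ⟨⟨v, hv, hv1, hmin⟩, hle⟩ :=
    Polynomial.isLeast_integral_sq_of_eval_eq_one (by norm_num : (-1 : ℝ) < 1) p
  refine ⟨⟨v, hv, hv1, by rw [← hmin]; ring⟩, ?_⟩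
  rintro _ ⟨w, hw, hw1, rfl⟩
  calc 1 / ((p : ℝ) + 1) ^ 2 = 1 / 2 * ((1 - -1) / ((p : ℝ) + 1) ^ 2) := by ring
    _ ≤ 1 / 2 * ∫ t in (-1 : ℝ)..1, (w.eval t) ^ 2 := by gcongr; exact hle ⟨w, hw, hw1, rfl⟩
end

section
/- Let g : [0,π] → ℝ be twice continuously differentiable with |g''(ξ)| ≤ Ψ for all ξ, and suppose g(kπ/m) ≥ −1 for all integers k with 0 ≤ k ≤ m. Then g(ξ) ≥ −1 − π²Ψ/(8m²) for all ξ ∈ [0,π]. -/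
/-!
On a cell `[a, b] = [kπ/m, (k+1)π/m]` the function `g x + Ψ/2 (x - a)(b - x)` has nonpositive
second derivative, hence is concave and bounded below by its endpoint values `g a, g b ≥ -1`.
The added parabola is at most `Ψ (b - a)² / 8 = π²Ψ / (8m²)`.
-/

open Set

lemma concaveOn_add_parabola_of_iteratedDerivWithin_two_le {g : ℝ → ℝ} {s : Set ℝ} {a b Ψ : ℝ}
    (hs : UniqueDiffOn ℝ s) (hab : Icc a b ⊆ s) (hg : ContDiffOn ℝ 2 g s)
    (hΨ : ∀ x ∈ Ioo a b, iteratedDerivWithin 2 g s x ≤ Ψ) :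
    ConcaveOn ℝ (Icc a b) (fun x ↦ g x + Ψ / 2 * ((x - a) * (b - x))) := by
  have hIoo : Ioo a b ⊆ s := Ioo_subset_Icc_self.trans hab
  have hg' : DifferentiableOn ℝ (derivWithin g s) s :=
    (hg.derivWithin (m := 1) hs (by norm_num)).differentiableOn (by norm_num)
  refine concaveOn_of_hasDerivWithinAt2_nonpos (convex_Icc a b)
    (f' := fun x ↦ derivWithin g s x + Ψ / 2 * (a + b - 2 * x))
    (f'' := fun x ↦ iteratedDerivWithin 2 g s x - Ψ) ?_ ?_ ?_ ?_
  · exact (hg.continuousOn.mono hab).add (by fun_prop)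
  · rw [interior_Icc]
    intro x hx
    have hq : HasDerivAt (fun y ↦ Ψ / 2 * ((y - a) * (b - y))) (Ψ / 2 * (a + b - 2 * x)) x :=
      ((((hasDerivAt_id' x).sub_const a).mul
        ((hasDerivAt_id' x).const_sub b)).const_mul (Ψ / 2)).congr_deriv (by ring)
    exact ((hg.differentiableOn (by norm_num) x (hIoo hx)).hasDerivWithinAt.mono hIoo).add
      hq.hasDerivWithinAt
  · rw [interior_Icc]
    intro x hx
    have hq : HasDerivAt (fun y ↦ Ψ / 2 * (a + b - 2 * y)) (-Ψ) x :=
      ((((hasDerivAt_id' x).const_mul 2).const_sub (a + b)).const_mul (Ψ / 2)).congr_deriv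
        (by ring)
    rw [sub_eq_add_neg, iteratedDerivWithin_succ', iteratedDerivWithin_one]
    exact ((hg' x (hIoo hx)).hasDerivWithinAt.mono hIoo).add hq.hasDerivWithinAt
  · rw [interior_Icc]
    exact fun x hx ↦ sub_nonpos.mpr (hΨ x hx)

lemma sub_parabola_le_of_iteratedDerivWithin_two_le {g : ℝ → ℝ} {s : Set ℝ} {a b c Ψ x : ℝ}
    (hs : UniqueDiffOn ℝ s) (hab : Icc a b ⊆ s) (hg : ContDiffOn ℝ 2 g s)
    (hΨ : ∀ x ∈ Ioo a b, iteratedDerivWithin 2 g s x ≤ Ψ) (ha : c ≤ g a) (hb : c ≤ g b)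
    (hx : x ∈ Icc a b) :
    c - Ψ / 2 * ((x - a) * (b - x)) ≤ g x := by
  have hle : a ≤ b := hx.1.trans hx.2
  have := (concaveOn_add_parabola_of_iteratedDerivWithin_two_le hs hab hg hΨ).min_le_of_mem_Icc
    (left_mem_Icc.mpr hle) (right_mem_Icc.mpr hle) hx
  simp only [sub_self, zero_mul, mul_zero, add_zero] at this
  linarith [le_min ha hb]

lemma exists_lt_mem_Icc_mul {h ξ : ℝ} {m : ℕ} (hh : 0 < h) (hm : 0 < m)
    (hξ : ξ ∈ Icc 0 (m * h)) : ∃ k < m, ξ ∈ Icc (k * h) ((k + 1) * h) := by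
  obtain hlt | hge := lt_or_ge ⌊ξ / h⌋₊ m
  · refine ⟨_, hlt, ?_, ?_⟩
    · exact (le_div_iff₀ hh).mp (Nat.floor_le (div_nonneg hξ.1 hh.le))
    · exact ((div_lt_iff₀ hh).mp (Nat.lt_floor_add_one _)).le
  · refine ⟨m - 1, Nat.sub_lt hm one_pos, ?_, ?_⟩
    · have hmξ : (m : ℝ) ≤ ξ / h :=
        (Nat.cast_le.mpr hge).trans (Nat.floor_le (div_nonneg hξ.1 hh.le))
      rw [← le_div_iff₀ hh]
      exact (Nat.cast_le.mpr (Nat.sub_le m 1)).trans hmξ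
    · rw [Nat.cast_pred hm, sub_add_cancel]
      exact hξ.2

open Real in
theorem sampled_lower_bound (g : ℝ → ℝ) (Ψ : ℝ) (m : ℕ) (hm : 0 < m)
    (hg : ContDiffOn ℝ 2 g (Set.Icc 0 π))
    (hΨ : ∀ ξ ∈ Set.Icc (0 : ℝ) π,
      |iteratedDerivWithin 2 g (Set.Icc 0 π) ξ| ≤ Ψ)
    (hsample : ∀ k : ℕ, k ≤ m → -1 ≤ g ((k : ℝ) * π / m)) :
    ∀ ξ ∈ Set.Icc (0 : ℝ) π,
      -1 - π ^ 2 * Ψ / (8 * (m : ℝ) ^ 2) ≤ g ξ := by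
  intro ξ hξ
  have hm' : (0 : ℝ) < m := Nat.cast_pos.mpr hm
  have hΨ0 : 0 ≤ Ψ := (abs_nonneg _).trans (hΨ 0 ⟨le_rfl, pi_pos.le⟩)
  set h := π / m
  have hsample' (k : ℕ) (hk : k ≤ m) : -1 ≤ g (k * h) := by
    simpa only [h, mul_div_assoc] using hsample k hk
  obtain ⟨k, hk, hkξ⟩ := exists_lt_mem_Icc_mul (div_pos pi_pos hm') hm
    (by rwa [mul_div_cancel₀ _ hm'.ne'])
  have hcell : Icc (k * h) ((k + 1) * h) ⊆ Icc 0 π := by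
    refine Icc_subset_Icc (by positivity) ?_
    calc ((k : ℝ) + 1) * h ≤ m * h := by gcongr; exact_mod_cast hk
      _ = π := mul_div_cancel₀ _ hm'.ne'
  have hparabola := sub_parabola_le_of_iteratedDerivWithin_two_le (uniqueDiffOn_Icc pi_pos) hcell hg
    (fun x hx ↦ (le_abs_self _).trans (hΨ x (hcell (Ioo_subset_Icc_self hx))))
    (hsample' k hk.le) (by exact_mod_cast hsample' (k + 1) hk) hkξ
  have hprod : (ξ - k * h) * ((k + 1) * h - ξ) ≤ h ^ 2 / 4 := by
    nlinarith [sq_nonneg (2 * ξ - (2 * k + 1) * h)]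
  calc -1 - π ^ 2 * Ψ / (8 * (m : ℝ) ^ 2) = -1 - Ψ / 2 * (h ^ 2 / 4) := by
        simp only [h]; field_simp; ring
    _ ≤ _ := by gcongr
    _ ≤ g ξ := hparabola
end
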